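/- arXiv:quant-ph/0008059 — 2 statements merged into one kernel-verified Lean document; each statement's English description precedes it below -/
import Mathlib

section
/- Let q be an odd prime power, χ the quadratic character of 𝔽_q, and S ⊆ 𝔽_q with |S| ≥ 4. Then there exists i ∈ 𝔽_q such that each of the three sets S_i^+ = {j∈S : χ(i+j)=1}, S_i^− = {j∈S : χ(i+j)=−1}, S_i^0 = {j∈S : χ(i+j)=0} has cardinality strictly less than (3/4)|S|. -/
open scoped Classical

open Finset

/-- The quadratic character of a finite field: `0` at `0`, `1` on nonzero
squares, `-1` on nonsquares. -/
noncomputable def qchar {F : Type*} [Field F] (x : F) : ℤ :=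
  if x = 0 then 0 else if IsSquare x then 1 else -1

lemma qchar_eq {F : Type*} [Field F] [Fintype F] [DecidableEq F] (x : F) :
    qchar x = quadraticChar F x := by
  rw [quadraticChar_apply, quadraticCharFun, qchar]
  split_ifs <;> tauto

lemma quadChar_shift_sum {F : Type*} [Field F] [Fintype F] [DecidableEq F]
    (hF : ringChar F ≠ 2) {a : F} (ha : a ≠ 0) :
    ∑ x : F, quadraticChar F x * quadraticChar F (x + a) = -1 := by
  have h1 : ∑ x : F, quadraticChar F x * quadraticChar F (x + a)
      = ∑ x ∈ univ.erase (0 : F), quadraticChar F (1 + a * x⁻¹) := by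
    rw [← Finset.sum_erase (a := (0:F)) _ (by simp)]
    refine Finset.sum_congr rfl fun x hx => ?_
    have hx0 : x ≠ 0 := (Finset.mem_erase.mp hx).1
    have key : x * (x + a) = x ^ 2 * (1 + a * x⁻¹) := by field_simp
    rw [← map_mul, key, map_mul, quadraticChar_sq_one' hx0, one_mul]
  have h2 : ∑ x ∈ univ.erase (0 : F), quadraticChar F (1 + a * x⁻¹)
      = ∑ y ∈ univ.erase (1 : F), quadraticChar F y := by
    refine Finset.sum_nbij' (fun x => 1 + a * x⁻¹) (fun y => a * (y - 1)⁻¹) ?_ ?_ ?_ ?_ ?_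
    · intro x hx
      have hx0 : x ≠ 0 := (Finset.mem_erase.mp hx).1
      simp only [Finset.mem_erase, Finset.mem_univ, and_true]
      intro h
      have : a * x⁻¹ = 0 := by linear_combination h
      simp [ha, hx0] at this
    · intro y hy
      have hy1 : y ≠ 1 := (Finset.mem_erase.mp hy).1
      simp only [Finset.mem_erase, Finset.mem_univ, and_true]
      have : y - 1 ≠ 0 := sub_ne_zero.mpr hy1
      simp [ha, this]
    · intro x hx
      have hx0 : x ≠ 0 := (Finset.mem_erase.mp hx).1
      field_simp
      simp [ha]
    · intro y hy
      have hy1 : y ≠ 1 := (Finset.mem_erase.mp hy).1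
      have h0 : y - 1 ≠ 0 := sub_ne_zero.mpr hy1
      field_simp
      ring
    · intro x hx; rfl
  have h3 : ∑ y ∈ univ.erase (1 : F), quadraticChar F y
      = (∑ y : F, quadraticChar F y) - quadraticChar F 1 := by
    rw [← Finset.sum_erase_add _ _ (Finset.mem_univ (1:F))]; ring
  rw [h1, h2, h3, quadraticChar_sum_zero hF, map_one]
  ring

theorem legendre_splitting_index_exists {F : Type*} [Field F] [Fintype F]
    (hq : Odd (Fintype.card F)) (S : Finset F) (hS : 4 ≤ S.card) :
    ∃ i : F,
      ((S.filter (fun j => qchar (i + j) = 1)).card : ℝ) < 3 / 4 * S.card ∧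
      ((S.filter (fun j => qchar (i + j) = -1)).card : ℝ) < 3 / 4 * S.card ∧
      ((S.filter (fun j => qchar (i + j) = 0)).card : ℝ) < 3 / 4 * S.card := by
  classical
  have hF2 : ringChar F ≠ 2 := by
    intro h
    have h2 := FiniteField.even_card_of_char_two h
    rw [Nat.odd_iff] at hq
    omega
  by_contra hcon
  push_neg at hcon
  set n := S.card with hn
  set χ := quadraticChar F with hχ
  have hqc : ∀ x : F, qchar x = χ x := fun x => qchar_eq x
  set f : F → ℤ := fun i => ∑ j ∈ S, χ (i + j) with hf
  -- value trichotomy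
  have hval : ∀ x : F, χ x = 1 ∨ χ x = -1 ∨ χ x = 0 := by
    intro x
    rcases eq_or_ne x 0 with h | h
    · simp [hχ, h]
    · rcases quadraticChar_dichotomy h with h' | h' <;> simp [hχ, h']
  -- notation for the three cards
  have hplus_minus : ∀ i : F,
      (S.filter (fun j => qchar (i + j) = 1)).card
        + (S.filter (fun j => qchar (i + j) = -1)).card ≤ n := by
    intro i
    rw [← Finset.card_union_of_disjoint]
    · exact Finset.card_le_card (Finset.union_subset (Finset.filter_subset _ _)
        (Finset.filter_subset _ _))
    · refine Finset.disjoint_filter_filter' _ _ ?_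
      intro p h1 h2 j hj
      have := h1 j hj
      have := h2 j hj
      omega
  have hfval : ∀ i : F, f i =
      ((S.filter (fun j => qchar (i + j) = 1)).card : ℤ)
        - ((S.filter (fun j => qchar (i + j) = -1)).card : ℤ) := by
    intro i
    have : ∀ j ∈ S, χ (i + j) =
        (if qchar (i + j) = 1 then (1:ℤ) else 0) - (if qchar (i + j) = -1 then (1:ℤ) else 0) := by
      intro j _
      rcases hval (i + j) with h | h | h <;> simp [hqc, h]
    rw [hf]
    dsimp only
    rw [Finset.sum_congr rfl this, Finset.sum_sub_distrib, Finset.sum_boole, Finset.sum_boole]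
  -- zero set is small
  have hzero : ∀ i : F, (S.filter (fun j => qchar (i + j) = 0)).card ≤ 1 := by
    intro i
    refine Finset.card_le_one.mpr ?_
    intro a ha b hb
    simp only [Finset.mem_filter, hqc] at ha hb
    have ha' : i + a = 0 := by
      by_contra h
      rcases quadraticChar_dichotomy h with h' | h' <;> rw [ha.2] at h' <;> omega
    have hb' : i + b = 0 := by
      by_contra h
      rcases quadraticChar_dichotomy h with h' | h' <;> rw [hb.2] at h' <;> omega
    have := ha'.trans hb'.symm
    linear_combination this
  have hn4 : (4:ℝ) ≤ (n:ℝ) := by exact_mod_cast hS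
  -- from the contradiction hypothesis, each i has a big side
  have hbig : ∀ i : F,
      (3/4 * (n:ℝ) ≤ ((S.filter (fun j => qchar (i + j) = 1)).card : ℝ)) ∨
      (3/4 * (n:ℝ) ≤ ((S.filter (fun j => qchar (i + j) = -1)).card : ℝ)) := by
    intro i
    by_contra h
    push_neg at h
    have h3 := hcon i h.1 h.2
    have hz : ((S.filter (fun j => qchar (i + j) = 0)).card : ℝ) ≤ 1 := by
      exact_mod_cast hzero i
    linarith
  -- |f i| ≥ n / 2
  have key : ∀ i : F, (n:ℝ)/2 ≤ |(f i : ℝ)| := by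
    intro i
    have hpm : ((S.filter (fun j => qchar (i + j) = 1)).card : ℝ)
        + ((S.filter (fun j => qchar (i + j) = -1)).card : ℝ) ≤ (n:ℝ) := by
      exact_mod_cast hplus_minus i
    have hfr : (f i : ℝ) = ((S.filter (fun j => qchar (i + j) = 1)).card : ℝ)
        - ((S.filter (fun j => qchar (i + j) = -1)).card : ℝ) := by
      rw [hfval i]; push_cast; ring
    rcases hbig i with h | h
    · have : (n:ℝ)/2 ≤ (f i : ℝ) := by rw [hfr]; linarith
      exact this.trans (le_abs_self _)
    · have : (n:ℝ)/2 ≤ -(f i : ℝ) := by rw [hfr]; linarith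
      exact this.trans (neg_le_abs _)
  -- second moment identity
  have hT : ∀ j ∈ S, ∀ k ∈ S, ∑ i : F, χ (i + j) * χ (i + k)
      = if j = k then (Fintype.card F : ℤ) - 1 else -1 := by
    intro j _ k _
    split_ifs with hjk
    · subst hjk
      have h1 : ∀ i : F, χ (i + j) * χ (i + j) = 1 - (if i = -j then (1:ℤ) else 0) := by
        intro i
        split_ifs with h
        · simp [hχ, h]
        · have hne : i + j ≠ 0 := fun hc => h (by linear_combination hc)
          rw [← sq, hχ, quadraticChar_sq_one hne]; ring
      rw [Finset.sum_congr rfl (fun i _ => h1 i), Finset.sum_sub_distrib,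
        Finset.sum_const, Finset.sum_ite_eq' Finset.univ (-j) (fun _ => (1:ℤ))]
      simp
    · have ha : k - j ≠ 0 := sub_ne_zero.mpr (Ne.symm hjk)
      have := quadChar_shift_sum hF2 ha
      rw [← this]
      refine Fintype.sum_equiv (Equiv.addRight j) _ _ ?_
      intro i
      simp only [Equiv.coe_addRight]
      have e1 : i + j + (k - j) = i + k := by ring
      rw [hχ, e1]
  have hmom : ∑ i : F, (f i)^2 = (n : ℤ) * ((Fintype.card F : ℤ) - n) := by
    have h1 : ∀ i : F, (f i)^2 = ∑ j ∈ S, ∑ k ∈ S, χ (i + j) * χ (i + k) := by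
      intro i
      rw [hf]; dsimp only; rw [sq, Finset.sum_mul_sum]
    rw [Finset.sum_congr rfl (fun i _ => h1 i), Finset.sum_comm]
    have h2 : ∀ j ∈ S, ∑ i : F, ∑ k ∈ S, χ (i + j) * χ (i + k)
        = ∑ k ∈ S, ∑ i : F, χ (i + j) * χ (i + k) := fun j _ => Finset.sum_comm
    rw [Finset.sum_congr rfl h2]
    have h3 : ∀ j ∈ S, ∑ k ∈ S, ∑ i : F, χ (i + j) * χ (i + k)
        = (Fintype.card F : ℤ) - n := by
      intro j hj
      rw [Finset.sum_congr rfl (hT j hj), ← Finset.add_sum_erase _ _ hj, if_pos rfl]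
      rw [Finset.sum_congr rfl (fun k hk => if_neg (Finset.ne_of_mem_erase hk).symm)]
      rw [Finset.sum_const, Finset.card_erase_of_mem hj, nsmul_eq_mul]
      have h1n : (1:ℕ) ≤ S.card := by omega
      rw [Nat.cast_sub h1n]
      push_cast
      ring
    rw [Finset.sum_congr rfl h3, Finset.sum_const]
    simp [mul_comm]
    exact Or.inl rfl
  -- put it together
  have hcard : (0:ℝ) < (Fintype.card F : ℝ) := by
    have := Fintype.card_pos (α := F); exact_mod_cast this
  have hlow : (Fintype.card F : ℝ) * ((n:ℝ)/2)^2 ≤ ∑ i : F, ((f i : ℝ))^2 := by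
    calc (Fintype.card F : ℝ) * ((n:ℝ)/2)^2
        = ∑ _i : F, ((n:ℝ)/2)^2 := by rw [Finset.sum_const]; simp [mul_comm]
      _ ≤ ∑ i : F, ((f i : ℝ))^2 := by
          refine Finset.sum_le_sum fun i _ => ?_
          rw [← sq_abs ((f i : ℝ))]
          have h0 : (0:ℝ) ≤ (n:ℝ)/2 := by linarith
          exact pow_le_pow_left₀ h0 (key i) 2
  have hhigh : ∑ i : F, ((f i : ℝ))^2 = (n:ℝ) * ((Fintype.card F : ℝ) - n) := by
    have := hmom
    have : ((∑ i : F, (f i)^2 : ℤ) : ℝ) = (((n : ℤ) * ((Fintype.card F : ℤ) - n) : ℤ) : ℝ) := by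
      exact_mod_cast congrArg (fun z : ℤ => (z : ℝ)) hmom
    push_cast at this
    convert this using 1
  rw [hhigh] at hlow
  nlinarith [mul_nonneg hcard.le (by linarith : (0:ℝ) ≤ (n:ℝ) - 4), hlow, hn4, hcard]
end

section
/- Let q be an odd prime power and s, r ∈ 𝔽_q with s ≠ r. Define unit vectors ψ_s, ψ_r ∈ ℂ^{q+1} with coordinates indexed by 𝔽_q ∪ {dummy}: (ψ_s)_i = χ(i+s)/√q for i ∈ 𝔽_q and (ψ_s)_dummy = 1/√q. Then ⟨ψ_r, ψ_s⟩ = 0 and ⟨ψ_s, ψ_s⟩ = 1; i.e., {ψ_s : s ∈ 𝔽_q} is an orthonormal family. -/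
open scoped Classical

/-- The state `ψ_s ∈ ℂ^{q+1}`, indexed by `𝔽_q ∪ {dummy}` (modeled by
`Option F`, with `none` the dummy coordinate): `(ψ_s)_i = χ(i+s)/√q` and
`(ψ_s)_dummy = 1/√q`. -/
noncomputable def psi {F : Type*} [Field F] [Fintype F] (s : F) :
    Option F → ℂ
  | some i => (qchar (i + s) : ℂ) / Real.sqrt (Fintype.card F)
  | none => 1 / Real.sqrt (Fintype.card F)

open Finset

lemma qchar_eq_quadraticChar {F : Type*} [Field F] [Fintype F] (x : F) :
    qchar x = quadraticChar F x := by
  rw [quadraticChar_apply, quadraticCharFun, qchar]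
  split_ifs <;> simp_all

lemma key_sum {F : Type*} [Field F] [Fintype F] (hF : ringChar F ≠ 2)
    {c : F} (hc : c ≠ 0) :
    ∑ y : F, quadraticChar F y * quadraticChar F (y + c) = -1 := by
  have h1 : ∀ y : F, y ≠ 0 → quadraticChar F y * quadraticChar F (y + c)
      = quadraticChar F (1 + c * y⁻¹) := by
    intro y hy
    rw [← map_mul]
    have hy2 : y * (y + c) = (1 + c * y⁻¹) * y ^ 2 := by field_simp
    rw [hy2, map_mul, quadraticChar_sq_one' hy, mul_one]
  rw [← Finset.sum_erase_add _ _ (Finset.mem_univ (0:F))]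
  rw [Finset.sum_congr rfl (fun y hy => h1 y (Finset.ne_of_mem_erase hy))]
  have hbij : ∑ y ∈ univ.erase (0:F), quadraticChar F (1 + c * y⁻¹)
      = ∑ z ∈ univ.erase (1:F), quadraticChar F z := by
    apply Finset.sum_nbij' (fun y => 1 + c * y⁻¹) (fun z => c * (z - 1)⁻¹)
    · intro y hy
      simp only [mem_erase, mem_univ, and_true] at hy ⊢
      intro h
      apply hy
      have : c * y⁻¹ = 0 := by linear_combination h
      rcases mul_eq_zero.1 this with h' | h'
      · exact absurd h' hc
      · exact inv_eq_zero.mp h'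
    · intro z hz
      simp only [mem_erase, mem_univ, and_true] at hz ⊢
      intro h
      rcases mul_eq_zero.1 h with h' | h'
      · exact hc h'
      · exact hz (sub_eq_zero.mp (inv_eq_zero.mp h'))
    · intro y hy
      simp only [mem_erase, mem_univ, and_true] at hy
      field_simp
      rw [add_sub_cancel_left, div_self hc]
    · intro z hz
      simp only [mem_erase, mem_univ, and_true] at hz
      have : z - 1 ≠ 0 := sub_ne_zero.mpr hz
      field_simp
      ring
    · intros; rfl
  rw [hbij, quadraticChar_zero, zero_mul, add_zero]
  have := quadraticChar_sum_zero (F := F) hF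
  rw [← Finset.sum_erase_add _ _ (Finset.mem_univ (1:F))] at this
  simp only [map_one] at this
  linarith

theorem psi_orthonormal {F : Type*} [Field F] [Fintype F]
    (hq : Odd (Fintype.card F)) (s r : F) (hsr : s ≠ r) :
    ∑ x : Option F, (starRingEnd ℂ) (psi r x) * psi s x = 0 ∧
    ∑ x : Option F, (starRingEnd ℂ) (psi s x) * psi s x = 1 := by
  have hchar : ringChar F ≠ 2 := by
    intro h
    have h2 := FiniteField.even_card_of_char_two h
    obtain ⟨k, hk⟩ := hq
    omega
  set q := Fintype.card F with hqdef
  have hq0 : 0 < q := Fintype.card_pos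
  have hqne : (q : ℂ) ≠ 0 := by exact_mod_cast hq0.ne'
  have hsq : ((Real.sqrt q : ℝ) : ℂ) * ((Real.sqrt q : ℝ) : ℂ) = (q : ℂ) := by
    rw [← Complex.ofReal_mul, Real.mul_self_sqrt (by positivity)]
    norm_num
  have hpsi : ∀ (a : F) (x : Option F), (starRingEnd ℂ) (psi a x) = psi a x := by
    intro a x
    cases x <;> simp [psi, map_div₀, Complex.conj_ofReal]
  have key : ∀ a b : F, ∑ x : Option F, (starRingEnd ℂ) (psi a x) * psi b x
      = (1 + ((∑ i : F, quadraticChar F (i + a) * quadraticChar F (i + b) : ℤ) : ℂ)) / q := by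
    intro a b
    rw [Fintype.sum_option]
    have h1 : (starRingEnd ℂ) (psi a none) * psi b none = 1 / q := by
      rw [hpsi]
      show (1 / (Real.sqrt q : ℂ)) * (1 / (Real.sqrt q : ℂ)) = 1 / q
      rw [div_mul_div_comm, one_mul, hsq]
    have h2 : ∀ i : F, (starRingEnd ℂ) (psi a (some i)) * psi b (some i)
        = ((quadraticChar F (i + a) * quadraticChar F (i + b) : ℤ) : ℂ) / q := by
      intro i
      rw [hpsi]
      show ((qchar (i + a) : ℂ) / (Real.sqrt q : ℂ)) * ((qchar (i + b) : ℂ) / (Real.sqrt q : ℂ)) = _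
      rw [div_mul_div_comm, hsq, qchar_eq_quadraticChar, qchar_eq_quadraticChar]
      push_cast
      ring
    rw [h1, Finset.sum_congr rfl (fun i _ => h2 i), ← Finset.sum_div]
    push_cast
    ring
  constructor
  · rw [key]
    have hsum : ∑ i : F, quadraticChar F (i + r) * quadraticChar F (i + s) = -1 := by
      have hc : s - r ≠ 0 := sub_ne_zero.mpr hsr
      have hb := key_sum hchar hc
      rw [← hb]
      exact Fintype.sum_equiv (Equiv.addRight r) _ _ (fun i => by
        simp only [Equiv.coe_addRight]
        congr 1
        ring)
    rw [hsum]
    norm_num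
  · rw [key]
    have hdiag : ∑ i : F, quadraticChar F (i + s) * quadraticChar F (i + s) = (q : ℤ) - 1 := by
      rw [← Finset.sum_erase_add _ _ (Finset.mem_univ (-s))]
      have hterm : ∀ i ∈ univ.erase (-s),
          quadraticChar F (i + s) * quadraticChar F (i + s) = 1 := by
        intro i hi
        have hne : i + s ≠ 0 := by
          intro h
          exact (Finset.ne_of_mem_erase hi) (by linear_combination h)
        rw [← sq, quadraticChar_sq_one hne]
      rw [Finset.sum_congr rfl hterm, Finset.sum_const, Finset.card_erase_of_mem (mem_univ _),
        Finset.card_univ, neg_add_cancel, quadraticChar_zero, zero_mul, add_zero]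
      simp
      omega
    rw [hdiag]
    push_cast
    field_simp
    ring
end
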